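/- Let W be a real Banach space, w̄ : [−1,1] → W a continuous function, 𝓕 : W × [−1,1] → W a continuously differentiable map, and 𝓐 : [−1,1] → B(W) a continuous family of bounded linear operators such that 𝓐(α) is injective for every α ∈ [−1,1]. Fix R ∈ [0,∞] and nonnegative constants 𝓨, 𝓩₁, 𝓩₂ such that sup_{α∈[−1,1]} ‖𝓐(α) 𝓕(w̄(α), α)‖ ≤ 𝓨, sup_{α∈[−1,1]} ‖I − 𝓐(α)∘D_w𝓕(w̄(α), α)‖ ≤ 𝓩₁, and ‖𝓐(α)∘(D_w𝓕(w, α) − D_w𝓕(w̄(α), α))‖ ≤ 𝓩₂‖w − w̄(α)‖ for every α ∈ [−1,1] and every w with ‖w − w̄(α)‖ ≤ R. If there exists r ∈ [0, R] such that 𝓨 + r(𝓩₁ − 1) + (r²/2)𝓩₂ ≤ 0 and 𝓩₁ + r𝓩₂ < 1, then there exists a unique continuous function w⋆ : [−1,1] → W satisfying ‖w⋆(α) − w̄(α)‖ ≤ r and 𝓕(w⋆(α), α) = 0 for all α ∈ [−1,1]. -/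

import Mathlib

/-!
Since `𝓐 α` is injective, the zeros of `𝓕 · α` are the fixed points of the Newton-like map
`T_α w = w - 𝓐 α (𝓕 w α)`. On the ball of radius `r` about `w̄ α` its derivative satisfies
`‖DT_α w‖ ≤ Z₁ + Z₂ ‖w - w̄ α‖`. Comparing `T_α` with this affine bound along the segment from
`w̄ α` gives `‖T_α w - w̄ α‖ ≤ Y + Z₁ r + Z₂ r² / 2 ≤ r`, and the mean value inequality makes
`T_α` a `(Z₁ + r Z₂)`-contraction of that ball. Applied pointwise, `T` is then a contraction of
the closed ball of radius `r` about `w̄` in `C([-1, 1], W)`, whose unique fixed point is `w⋆`.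
-/

open Set Metric
open scoped NNReal ENNReal

section MeanValue

variable {E F : Type*} [NormedAddCommGroup E] [NormedSpace ℝ E] [NormedAddCommGroup F]
  [NormedSpace ℝ F] {f : E → F} {f' : E → E →L[ℝ] F} {x₀ x : E} {r a b : ℝ}

theorem norm_image_sub_le_of_norm_hasFDerivAt_le_affine
    (hf : ∀ y ∈ closedBall x₀ r, HasFDerivAt f (f' y) y)
    (bound : ∀ y ∈ closedBall x₀ r, ‖f' y‖ ≤ a + b * ‖y - x₀‖) (hx : x ∈ closedBall x₀ r) :
    ‖f x - f x₀‖ ≤ a * ‖x - x₀‖ + b / 2 * ‖x - x₀‖ ^ 2 := by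
  set h := x - x₀
  have hseg : ∀ t ∈ Icc (0 : ℝ) 1, x₀ + t • h ∈ closedBall x₀ r := fun t ht =>
    (convex_closedBall x₀ r).add_smul_sub_mem
      (mem_closedBall_self (nonempty_closedBall.1 ⟨x, hx⟩)) hx ht
  have hderiv : ∀ t ∈ Icc (0 : ℝ) 1,
      HasDerivAt (fun t : ℝ => f (x₀ + t • h) - f x₀) (f' (x₀ + t • h) h) t := by
    intro t ht
    have hline : HasDerivAt (fun t : ℝ => x₀ + t • h) h t := by
      simpa using ((hasDerivAt_id t).smul_const h).const_add x₀
    exact ((hf _ (hseg t ht)).comp_hasDerivAt t hline).sub_const (f x₀)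
  have hbound : ∀ t ∈ Ico (0 : ℝ) 1, ‖f' (x₀ + t • h) h‖ ≤ a * ‖h‖ + b * ‖h‖ ^ 2 * t := by
    intro t ht
    have hdist : ‖x₀ + t • h - x₀‖ = t * ‖h‖ := by
      rw [add_sub_cancel_left, norm_smul, Real.norm_of_nonneg ht.1]
    calc ‖f' (x₀ + t • h) h‖ ≤ ‖f' (x₀ + t • h)‖ * ‖h‖ := (f' _).le_opNorm h
      _ ≤ (a + b * (t * ‖h‖)) * ‖h‖ := by
        rw [← hdist]
        exact mul_le_mul_of_nonneg_right (bound _ (hseg t (Ico_subset_Icc_self ht))) (norm_nonneg h)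
      _ = a * ‖h‖ + b * ‖h‖ ^ 2 * t := by ring
  have hB : ∀ t : ℝ, HasDerivAt (fun t => a * ‖h‖ * t + b / 2 * ‖h‖ ^ 2 * t ^ 2)
      (a * ‖h‖ + b * ‖h‖ ^ 2 * t) t := fun t =>
    (((hasDerivAt_id t).const_mul (a * ‖h‖)).add
      ((hasDerivAt_pow 2 t).const_mul (b / 2 * ‖h‖ ^ 2))).congr_deriv (by simp; ring)
  have := image_norm_le_of_norm_deriv_right_le_deriv_boundary
    (fun t ht => (hderiv t ht).continuousAt.continuousWithinAt)
    (fun t ht => (hderiv t (Ico_subset_Icc_self ht)).hasDerivWithinAt) (by simp) hB hbound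
    (right_mem_Icc.2 zero_le_one)
  simpa [h] using this

theorem mapsTo_closedBall_of_radii_polynomial {g : E → E} {g' : E → E →L[ℝ] E} {Y Z₁ Z₂ : ℝ}
    (hg : ∀ x ∈ closedBall x₀ r, HasFDerivAt g (g' x) x)
    (hg' : ∀ x ∈ closedBall x₀ r, ‖g' x‖ ≤ Z₁ + Z₂ * ‖x - x₀‖)
    (hY : ‖g x₀ - x₀‖ ≤ Y) (hZ₁ : 0 ≤ Z₁) (hZ₂ : 0 ≤ Z₂)
    (hP : Y + r * (Z₁ - 1) + r ^ 2 / 2 * Z₂ ≤ 0) :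
    MapsTo g (closedBall x₀ r) (closedBall x₀ r) := by
  intro x hx
  have hρ := mem_closedBall_iff_norm.1 hx
  have hmv := norm_image_sub_le_of_norm_hasFDerivAt_le_affine hg hg' hx
  rw [mem_closedBall_iff_norm]
  calc ‖g x - x₀‖ ≤ ‖g x - g x₀‖ + ‖g x₀ - x₀‖ := norm_sub_le_norm_sub_add_norm_sub _ _ _
    _ ≤ Z₁ * r + Z₂ / 2 * r ^ 2 + Y := add_le_add (hmv.trans (by gcongr)) hY
    _ ≤ r := by linarith

theorem lipschitzOnWith_closedBall_of_norm_hasFDerivAt_le_affine {L : ℝ≥0}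
    (hf : ∀ y ∈ closedBall x₀ r, HasFDerivAt f (f' y) y)
    (bound : ∀ y ∈ closedBall x₀ r, ‖f' y‖ ≤ a + b * ‖y - x₀‖) (hb : 0 ≤ b)
    (hL : a + b * r ≤ L) : LipschitzOnWith L f (closedBall x₀ r) :=
  (convex_closedBall x₀ r).lipschitzOnWith_of_nnnorm_hasFDerivWithin_le
    (fun y hy => (hf y hy).hasFDerivWithinAt) fun y hy =>
      ((bound y hy).trans (by gcongr; exact mem_closedBall_iff_norm.1 hy)).trans hL

end MeanValue

theorem ContinuousLinearMap.norm_sub_comp_le {𝕜 E F G : Type*} [NontriviallyNormedField 𝕜]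
    [SeminormedAddCommGroup E] [SeminormedAddCommGroup F] [SeminormedAddCommGroup G]
    [NormedSpace 𝕜 E] [NormedSpace 𝕜 F] [NormedSpace 𝕜 G]
    (T : E →L[𝕜] G) (A : F →L[𝕜] G) (D D₀ : E →L[𝕜] F) :
    ‖T - A.comp D‖ ≤ ‖T - A.comp D₀‖ + ‖A.comp (D - D₀)‖ := by
  rw [A.comp_sub, norm_sub_rev (A.comp D)]
  exact norm_sub_le_norm_sub_add_norm_sub _ _ _

section ParametricFixedPoint

variable {K X : Type*} [TopologicalSpace K] [CompactSpace K] [MetricSpace X] [CompleteSpace X]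

theorem existsUnique_continuous_fixedPoint_of_lipschitzOnWith_closedBall
    (g : K → X → X) (hg : Continuous fun p : K × X => g p.1 p.2)
    {c : K → X} (hc : Continuous c) {r : ℝ} (hr : 0 ≤ r) {L : ℝ≥0} (hL : L < 1)
    (hmaps : ∀ α, MapsTo (g α) (closedBall (c α) r) (closedBall (c α) r))
    (hlip : ∀ α, LipschitzOnWith L (g α) (closedBall (c α) r)) :
    ∃! u : K → X, Continuous u ∧ ∀ α, u α ∈ closedBall (c α) r ∧ g α (u α) = u α := by
  let T : C(K, X) → C(K, X) := fun f =>
    ⟨fun α => g α (f α), hg.comp (continuous_id.prodMk f.continuous)⟩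
  let B : Set C(K, X) := closedBall ⟨c, hc⟩ r
  have mem_B : ∀ f : C(K, X), f ∈ B ↔ ∀ α, f α ∈ closedBall (c α) r := fun _ =>
    ContinuousMap.dist_le hr
  have hTmaps : MapsTo T B B := fun f hf => (mem_B _).2 fun α => hmaps α ((mem_B f).1 hf α)
  have hTlip : LipschitzOnWith L T B := .of_dist_le_mul fun f hf f' hf' =>
    (ContinuousMap.dist_le (by positivity)).2 fun α =>
      ((hlip α).dist_le_mul _ ((mem_B f).1 hf α) _ ((mem_B f').1 hf' α)).trans
        (mul_le_mul_of_nonneg_left (ContinuousMap.dist_apply_le_dist α) L.2)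
  have hT : ContractingWith L (hTmaps.restrict T B B) := ⟨hL, hTlip.mapsToRestrict hTmaps⟩
  obtain ⟨u, hu, hTu, -⟩ := hT.exists_fixedPoint' isClosed_closedBall.isComplete hTmaps
    (mem_closedBall_self hr) (edist_ne_top _ _)
  refine ⟨u, ⟨u.continuous, fun α => ⟨(mem_B u).1 hu α, congrFun (congrArg (⇑) hTu) α⟩⟩, ?_⟩
  rintro v ⟨hv, hvB⟩
  have := hT.fixedPoint_unique' (x := ⟨⟨v, hv⟩, (mem_B _).2 fun α => (hvB α).1⟩) (y := ⟨u, hu⟩)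
    (Subtype.ext (ContinuousMap.ext fun α => (hvB α).2)) (Subtype.ext hTu)
  exact congrArg (fun f : B => ⇑f.1) this

end ParametricFixedPoint

theorem uniform_radii_polynomial_contraction_general
    {W : Type*} [NormedAddCommGroup W] [NormedSpace ℝ W] [CompleteSpace W]
    (wbar : Set.Icc (-1 : ℝ) 1 → W) (hwbar : Continuous wbar)
    (𝓕 : W → ℝ → W) (h𝓕 : ContDiff ℝ 1 (fun p : W × ℝ => 𝓕 p.1 p.2))
    (𝓐 : Set.Icc (-1 : ℝ) 1 → W →L[ℝ] W) (h𝓐cont : Continuous 𝓐)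
    (h𝓐inj : ∀ α, Function.Injective (𝓐 α))
    (R : ℝ≥0∞) (Y Z₁ Z₂ : ℝ) (hZ₁0 : 0 ≤ Z₁) (hZ₂0 : 0 ≤ Z₂)
    (hY : ∀ α : Set.Icc (-1 : ℝ) 1, ‖𝓐 α (𝓕 (wbar α) α)‖ ≤ Y)
    (hZ₁ : ∀ α : Set.Icc (-1 : ℝ) 1,
      ‖ContinuousLinearMap.id ℝ W -
        (𝓐 α).comp (fderiv ℝ (fun v => 𝓕 v α) (wbar α))‖ ≤ Z₁)
    (hZ₂ : ∀ α : Set.Icc (-1 : ℝ) 1, ∀ w : W, ENNReal.ofReal ‖w - wbar α‖ ≤ R →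
      ‖(𝓐 α).comp (fderiv ℝ (fun v => 𝓕 v α) w - fderiv ℝ (fun v => 𝓕 v α) (wbar α))‖
        ≤ Z₂ * ‖w - wbar α‖)
    (r : ℝ) (hr0 : 0 ≤ r) (hrR : ENNReal.ofReal r ≤ R)
    (hP : Y + r * (Z₁ - 1) + r ^ 2 / 2 * Z₂ ≤ 0)
    (hcontr : Z₁ + r * Z₂ < 1) :
    ∃! wstar : Set.Icc (-1 : ℝ) 1 → W, Continuous wstar ∧
      ∀ α : Set.Icc (-1 : ℝ) 1, ‖wstar α - wbar α‖ ≤ r ∧ 𝓕 (wstar α) α = 0 := by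
  set g : Set.Icc (-1 : ℝ) 1 → W → W := fun α w => w - 𝓐 α (𝓕 w α)
  have hF : ∀ (a : ℝ) (w : W), HasFDerivAt (fun v => 𝓕 v a) (fderiv ℝ (fun v => 𝓕 v a) w) w :=
    fun a w => DifferentiableAt.hasFDerivAt <|
      show DifferentiableAt ℝ ((fun p : W × ℝ => 𝓕 p.1 p.2) ∘ fun v => (v, a)) w from
        (h𝓕.differentiable one_ne_zero _).comp w
          (differentiableAt_id.prodMk (differentiableAt_const a))
  have hg : ∀ α w, HasFDerivAt (g α)
      (ContinuousLinearMap.id ℝ W - (𝓐 α).comp (fderiv ℝ (fun v => 𝓕 v α) w)) w :=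
    fun α w => (hasFDerivAt_id w).sub ((𝓐 α).hasFDerivAt.comp w (hF α w))
  have hg' : ∀ α, ∀ w ∈ closedBall (wbar α) r,
      ‖ContinuousLinearMap.id ℝ W - (𝓐 α).comp (fderiv ℝ (fun v => 𝓕 v α) w)‖
        ≤ Z₁ + Z₂ * ‖w - wbar α‖ := fun α w hw =>
    (ContinuousLinearMap.norm_sub_comp_le _ _ _ _).trans <| add_le_add (hZ₁ α) <|
      hZ₂ α w ((ENNReal.ofReal_le_ofReal (mem_closedBall_iff_norm.1 hw)).trans hrR)
  have hfix_iff : ∀ α w, g α w = w ↔ 𝓕 w α = 0 := fun α w =>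
    sub_eq_self.trans (map_eq_zero_iff _ (h𝓐inj α))
  have key := existsUnique_continuous_fixedPoint_of_lipschitzOnWith_closedBall g
    (by fun_prop) hwbar hr0 (Real.toNNReal_lt_one.2 hcontr)
    (fun α => mapsTo_closedBall_of_radii_polynomial (fun w _ => hg α w) (hg' α)
      (by simpa [g] using hY α) hZ₁0 hZ₂0 hP)
    (fun α => lipschitzOnWith_closedBall_of_norm_hasFDerivAt_le_affine (fun w _ => hg α w)
      (hg' α) hZ₂0 (by rw [mul_comm]; exact Real.le_coe_toNNReal _))
  simpa only [mem_closedBall_iff_norm, hfix_iff] using key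

/-- Uniform contraction theorem over the parameter interval `[-1, 1]`:
existence and uniqueness of a continuous family of zeros `w⋆ : [-1,1] → W` of the
parametrized map `𝓕` near the continuous approximate family `wbar`. -/
theorem uniform_radii_polynomial_contraction
    {W : Type*} [NormedAddCommGroup W] [NormedSpace ℝ W] [CompleteSpace W]
    (wbar : Set.Icc (-1 : ℝ) 1 → W) (hwbar : Continuous wbar)
    (𝓕 : W → ℝ → W) (h𝓕 : ContDiff ℝ 1 (fun p : W × ℝ => 𝓕 p.1 p.2))
    (𝓐 : Set.Icc (-1 : ℝ) 1 → W →L[ℝ] W) (h𝓐cont : Continuous 𝓐)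
    (h𝓐inj : ∀ α, Function.Injective (𝓐 α))
    (R : ℝ≥0∞) (Y Z₁ Z₂ : ℝ) (hY0 : 0 ≤ Y) (hZ₁0 : 0 ≤ Z₁) (hZ₂0 : 0 ≤ Z₂)
    (hY : ∀ α : Set.Icc (-1 : ℝ) 1, ‖𝓐 α (𝓕 (wbar α) α)‖ ≤ Y)
    (hZ₁ : ∀ α : Set.Icc (-1 : ℝ) 1,
      ‖ContinuousLinearMap.id ℝ W -
        (𝓐 α).comp (fderiv ℝ (fun v => 𝓕 v α) (wbar α))‖ ≤ Z₁)
    (hZ₂ : ∀ α : Set.Icc (-1 : ℝ) 1, ∀ w : W, ENNReal.ofReal ‖w - wbar α‖ ≤ R →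
      ‖(𝓐 α).comp (fderiv ℝ (fun v => 𝓕 v α) w - fderiv ℝ (fun v => 𝓕 v α) (wbar α))‖
        ≤ Z₂ * ‖w - wbar α‖)
    (r : ℝ) (hr0 : 0 ≤ r) (hrR : ENNReal.ofReal r ≤ R)
    (hP : Y + r * (Z₁ - 1) + r ^ 2 / 2 * Z₂ ≤ 0)
    (hcontr : Z₁ + r * Z₂ < 1) :
    ∃! wstar : Set.Icc (-1 : ℝ) 1 → W, Continuous wstar ∧
      ∀ α : Set.Icc (-1 : ℝ) 1, ‖wstar α - wbar α‖ ≤ r ∧ 𝓕 (wstar α) α = 0 :=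
  uniform_radii_polynomial_contraction_general wbar hwbar 𝓕 h𝓕 𝓐 h𝓐cont h𝓐inj R Y Z₁ Z₂ hZ₁0 hZ₂0 hY
    hZ₁ hZ₂ r hr0 hrR hP hcontr
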